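/- arXiv:1503.05800 — 3 statements merged into one kernel-verified Lean document; each statement's English description precedes it below -/
import Mathlib

section
/- Let g : ZMod N → ℂ satisfy ⟨g, Π_{(p,ℓ)} g⟩ ≠ 0 for p ∈ {0, 1} and every ℓ ∈ ZMod N. Then the full Gabor system (g_λ)_{λ ∈ (ZMod N)²} allows phase retrieval for non-vanishing signals: for all x, y : ZMod N → ℂ with x(n) ≠ 0 and y(n) ≠ 0 for every n ∈ ZMod N, if |⟨x, g_λ⟩| = |⟨y, g_λ⟩| for every λ ∈ (ZMod N)², then there exists c ∈ ℂ with |c| = 1 and x = c • y. -/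
open Complex Finset

/-- `gw N m = ω^m` where `ω = exp(2πi/N)` and `m : ZMod N`. -/
noncomputable def gw (N : ℕ) (m : ZMod N) : ℂ :=
  Complex.exp (2 * Real.pi * Complex.I * (m.val : ℂ) / (N : ℂ))

/-- Translation operator `(T_p x)(n) = x(n-p)`. -/
def Tr (N : ℕ) (p : ZMod N) (x : ZMod N → ℂ) : ZMod N → ℂ :=
  fun n => x (n - p)

/-- Modulation operator `(M_ℓ x)(n) = ω^{ℓ·n} x(n)`. -/
noncomputable def Md (N : ℕ) (l : ZMod N) (x : ZMod N → ℂ) : ZMod N → ℂ :=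
  fun n => gw N (l * n) * x n

/-- Time-frequency shift `Π_{(p,ℓ)} = M_ℓ ∘ T_p`. -/
noncomputable def Pig (N : ℕ) (p l : ZMod N) (x : ZMod N → ℂ) : ZMod N → ℂ :=
  Md N l (Tr N p x)

/-- Inner product, conjugate linear in the first argument. -/
noncomputable def inn (N : ℕ) [NeZero N] (x y : ZMod N → ℂ) : ℂ :=
  ∑ j : ZMod N, (starRingEnd ℂ) (x j) * y j

/-!
The squared modulus `l ↦ |⟨x, Π_{(p,l)} g⟩|²` is the DFT of the autocorrelation of the
windowed signal `n ↦ conj (x n) * g (n - p)`, so the measurements determine all these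
autocorrelations. Read as functions of `p`, they are cross-correlations of
`n ↦ x n * conj (x (n - q))` with `n ↦ g n * conj (g (n - q))`, whose DFT is
`l ↦ conj ⟨g, Π_{(q,l)} g⟩`. Where this never vanishes it can be divided out; for `q = 0, 1`
this recovers `|x n|²` and `x n * conj (x (n - 1))`, so `x / y` is invariant under
`n ↦ n + 1`, hence a constant of modulus one.
-/

open ComplexConjugate ZMod

section CrossCorrelation

variable {N : ℕ} [NeZero N]

noncomputable def crossCorr (u v : ZMod N → ℂ) (k : ZMod N) : ℂ :=
  ∑ n, conj (u n) * v (n + k)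

lemma dft_conj (u : ZMod N → ℂ) (l : ZMod N) :
    𝓕 (fun n => conj (u n)) l = conj (𝓕 u (-l)) := by
  simp only [dft_apply, smul_eq_mul, map_sum, map_mul, ← AddChar.map_neg_eq_conj, mul_neg,
    neg_neg]

lemma dft_crossCorr (u v : ZMod N → ℂ) (l : ZMod N) :
    𝓕 (crossCorr u v) l = conj (𝓕 u l) * 𝓕 v l := by
  simp only [dft_apply, crossCorr, smul_eq_mul, map_sum, map_mul, ← AddChar.map_neg_eq_conj,
    neg_neg]
  rw [Finset.sum_mul_sum]
  simp only [Finset.mul_sum]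
  rw [Finset.sum_comm]
  refine Finset.sum_congr rfl fun n _ => Fintype.sum_equiv (Equiv.addLeft n) _ _ fun k => ?_
  have hchar :
      stdAddChar (-(k * l)) = stdAddChar (n * l) * stdAddChar (-((n + k) * l)) := by
    rw [← AddChar.map_add_eq_mul]; ring_nf
  rw [Equiv.coe_addLeft, hchar]
  ring

lemma crossCorr_self_eq_of_norm_dft_eq {u v : ZMod N → ℂ} (h : ∀ l, ‖𝓕 u l‖ = ‖𝓕 v l‖) :
    crossCorr u u = crossCorr v v :=
  dft.injective <| funext fun l => by
    rw [dft_crossCorr, dft_crossCorr, Complex.conj_mul', Complex.conj_mul', h]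

lemma crossCorr_left_cancel {u v w : ZMod N → ℂ} (hu : ∀ l, 𝓕 u l ≠ 0)
    (h : crossCorr u v = crossCorr u w) : v = w :=
  dft.injective <| funext fun l => mul_left_cancel₀ ((map_ne_zero _).mpr (hu l)) <| by
    rw [← dft_crossCorr, ← dft_crossCorr, h]

end CrossCorrelation

lemma Function.Periodic.eq_apply_zero_of_zmod {N : ℕ} [NeZero N] {α : Type*} {f : ZMod N → α}
    (hf : Function.Periodic f 1) (n : ZMod N) : f n = f 0 := by
  obtain ⟨m, rfl⟩ := ZMod.natCast_zmod_surjective n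
  simpa using hf.nat_mul_eq m

lemma exists_norm_eq_one_smul_of_mul_conj_eq {N : ℕ} [NeZero N] {x y : ZMod N → ℂ}
    (hy : ∀ n, y n ≠ 0) (h₀ : ∀ n, x n * conj (x n) = y n * conj (y n))
    (h₁ : ∀ n, x n * conj (x (n - 1)) = y n * conj (y (n - 1))) :
    ∃ c : ℂ, ‖c‖ = 1 ∧ x = c • y := by
  have hstep (n : ZMod N) : x (n + 1) * y n = y (n + 1) * x n := by
    refine mul_right_cancel₀ ((map_ne_zero conj).mpr (hy n)) ?_
    have h₁' := h₁ (n + 1)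
    rw [add_sub_cancel_right] at h₁'
    linear_combination -x (n + 1) * h₀ n + x n * h₁'
  have hratio : Function.Periodic (fun n => x n / y n) 1 := fun n => by
    rw [div_eq_div_iff (hy _) (hy _), hstep, mul_comm]
  refine ⟨x 0 / y 0, ?_, funext fun n => ?_⟩
  · have h₀' : (‖x 0‖ ^ 2 : ℂ) = ‖y 0‖ ^ 2 := by simpa only [Complex.mul_conj'] using h₀ 0
    have hnorm : ‖x 0‖ = ‖y 0‖ :=
      (sq_eq_sq₀ (norm_nonneg _) (norm_nonneg _)).mp (by exact_mod_cast h₀')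
    rw [norm_div, hnorm, div_self (norm_ne_zero_iff.mpr (hy 0))]
  · rw [Pi.smul_apply, smul_eq_mul, ← hratio.eq_apply_zero_of_zmod n, div_mul_cancel₀ _ (hy n)]

section Gabor

variable {N : ℕ} [NeZero N]

lemma gw_eq_stdAddChar (m : ZMod N) : gw N m = stdAddChar m := by
  rw [stdAddChar_apply, toCircle_apply]
  rfl

lemma inn_Pig_eq_dft (x g : ZMod N → ℂ) (p l : ZMod N) :
    inn N x (Pig N p l g) = 𝓕 (fun n => conj (x n) * g (n - p)) (-l) := by
  simp only [inn, Pig, Md, Tr, gw_eq_stdAddChar, dft_apply, smul_eq_mul, mul_neg, neg_neg]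
  exact Finset.sum_congr rfl fun n _ => by rw [mul_comm l n]; ring

lemma conj_inn_Pig_self_eq_dft (g : ZMod N → ℂ) (p l : ZMod N) :
    conj (inn N g (Pig N p l g)) = 𝓕 (fun n => g n * conj (g (n - p))) l := by
  simp only [inn_Pig_eq_dft, ← dft_conj, map_mul, Complex.conj_conj]

lemma crossCorr_window_eq (x g : ZMod N → ℂ) (p q : ZMod N) :
    crossCorr (fun n => conj (x n) * g (n - p)) (fun n => conj (x n) * g (n - p)) (-q) =
      crossCorr (fun n => g n * conj (g (n - q))) (fun n => x n * conj (x (n - q))) p := by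
  refine Fintype.sum_equiv (Equiv.subRight p) _ _ fun n => ?_
  simp only [Equiv.subRight_apply, sub_add_cancel, map_mul, Complex.conj_conj, ← sub_eq_add_neg,
    sub_right_comm n q p]
  ring

lemma mul_conj_sub_eq_of_norm_inn_eq {g x y : ZMod N → ℂ} {q : ZMod N}
    (hg : ∀ l, inn N g (Pig N q l g) ≠ 0)
    (h : ∀ p l, ‖inn N x (Pig N p l g)‖ = ‖inn N y (Pig N p l g)‖) :
    (fun n => x n * conj (x (n - q))) = fun n => y n * conj (y (n - q)) := by
  refine crossCorr_left_cancel (u := fun n => g n * conj (g (n - q))) (fun l => ?_)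
    (funext fun p => ?_)
  · rw [← conj_inn_Pig_self_eq_dft]
    exact (map_ne_zero _).mpr (hg l)
  · rw [← crossCorr_window_eq, ← crossCorr_window_eq, crossCorr_self_eq_of_norm_dft_eq]
    intro l
    simpa only [inn_Pig_eq_dft, neg_neg] using h p (-l)

end Gabor

/-- If `⟨g, Π_{(p,ℓ)} g⟩ ≠ 0` for `p ∈ {0,1}` and all `ℓ`, then the full Gabor
system allows phase retrieval for non-vanishing signals. -/
theorem Gabor_phase_retrieval_nonvanishing (N : ℕ) [NeZero N] (g : ZMod N → ℂ)
    (hg : ∀ p ∈ ({0, 1} : Set (ZMod N)), ∀ l : ZMod N, inn N g (Pig N p l g) ≠ 0) :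
    ∀ x y : ZMod N → ℂ, (∀ n : ZMod N, x n ≠ 0) → (∀ n : ZMod N, y n ≠ 0) →
      (∀ p l : ZMod N,
        ‖inn N x (Pig N p l g)‖ = ‖inn N y (Pig N p l g)‖) →
      ∃ c : ℂ, ‖c‖ = 1 ∧ x = c • y := by
  intro x y _ hy hV
  have hxy (q : ZMod N) (hq : q ∈ ({0, 1} : Set (ZMod N))) :=
    mul_conj_sub_eq_of_norm_inn_eq (hg q hq) hV
  exact exists_norm_eq_one_smul_of_mul_conj_eq hy
    (by simpa only [sub_zero] using congrFun (hxy 0 (by simp)))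
    (congrFun (hxy 1 (by simp)))
end

section
/- Let θ ∈ ℤ be such that for every nonzero f : ZMod N → ℂ, ‖f‖₀ + ‖f̂‖₀ ≥ N − θ. Let K, k̂ ∈ ℕ and let g : ZMod N → ℂ be a generator such that for every p ∈ ZMod N, θ + K + 1 ≤ #{ℓ ∈ ZMod N : ⟨g, Π_{(p,ℓ)} g⟩ ≠ 0} ≤ k̂ (as integers). Let A, B be finite subsets of ZMod N with |A| ≥ θ + k̂ + 1 and |B| ≥ θ + K² − K + 2 (as integers). Then every N×N complex matrix H for which there exists a subset 𝒦 ⊆ ZMod N with |𝒦| ≤ K such that H i j = 0 whenever (i,j) ∉ 𝒦×𝒦, and which satisfies ⟨g_λ, H g_λ⟩ = 0 for all λ ∈ A×B, is the zero matrix. -/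
open Complex Finset

/-- The discrete Fourier transform `x̂(j) = ∑_n x(n) ω^{-nj}`. -/
noncomputable def dft (N : ℕ) [NeZero N] (x : ZMod N → ℂ) : ZMod N → ℂ :=
  fun j => ∑ n : ZMod N, x n * gw N (-(n * j))

/- ## Auxiliary lemmas about `gw` -/

lemma gw_eq_pow (N : ℕ) [NeZero N] (m : ZMod N) :
    gw N m = Complex.exp (2 * Real.pi * Complex.I / N) ^ m.val := by
  rw [gw, ← Complex.exp_nat_mul]
  ring_nf

lemma exp_pow_N (N : ℕ) [NeZero N] :
    Complex.exp (2 * Real.pi * Complex.I / N) ^ N = 1 := by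
  rw [← Complex.exp_nat_mul]
  have hN : (N : ℂ) ≠ 0 := Nat.cast_ne_zero.2 (NeZero.ne N)
  rw [show (N : ℂ) * (2 * Real.pi * Complex.I / N) = 2 * Real.pi * Complex.I by
    field_simp]
  simpa using Complex.exp_two_pi_mul_I

lemma epow_mod (N : ℕ) [NeZero N] (x : ℕ) :
    Complex.exp (2 * Real.pi * Complex.I / N) ^ (x % N) =
    Complex.exp (2 * Real.pi * Complex.I / N) ^ x := by
  conv_rhs => rw [← Nat.mod_add_div x N, pow_add, pow_mul, exp_pow_N, one_pow, mul_one]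

lemma gw_add (N : ℕ) [NeZero N] (a b : ZMod N) : gw N (a + b) = gw N a * gw N b := by
  rw [gw_eq_pow, gw_eq_pow, gw_eq_pow, ← pow_add, ZMod.val_add, epow_mod]

lemma gw_zero (N : ℕ) [NeZero N] : gw N 0 = 1 := by
  rw [gw_eq_pow, ZMod.val_zero, pow_zero]

lemma gw_ne_zero (N : ℕ) (a : ZMod N) : gw N a ≠ 0 := Complex.exp_ne_zero _

lemma gw_neg (N : ℕ) [NeZero N] (a : ZMod N) : gw N (-a) = (gw N a)⁻¹ := by
  have := gw_add N a (-a)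
  rw [add_neg_cancel, gw_zero] at this
  exact (inv_eq_of_mul_eq_one_right this.symm).symm

lemma conj_gw (N : ℕ) [NeZero N] (a : ZMod N) :
    (starRingEnd ℂ) (gw N a) = (gw N a)⁻¹ := by
  rw [gw_eq_pow, ← Complex.exp_nat_mul, ← Complex.exp_conj, ← Complex.exp_neg]
  congr 1
  simp [-ZMod.natCast_val, map_mul, map_div₀, Complex.conj_I, map_natCast, map_ofNat]
  ring

/-- The fundamental measurement identity. -/
lemma meas_eq (N : ℕ) [NeZero N] (g : ZMod N → ℂ) (H : Matrix (ZMod N) (ZMod N) ℂ)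
    (q j : ZMod N) :
    inn N (Pig N q j g) (H.mulVec (Pig N q j g)) =
    ∑ m : ZMod N,
      (∑ i : ZMod N, H i (i + m) * (starRingEnd ℂ) (g (i - q)) * g (i + m - q)) *
        gw N (j * m) := by
  have key : ∀ i : ZMod N,
      (starRingEnd ℂ) (Pig N q j g i) * (∑ n : ZMod N, H i n * Pig N q j g n)
      = ∑ m : ZMod N,
          H i (i + m) * (starRingEnd ℂ) (g (i - q)) * g (i + m - q) * gw N (j * m) := by
    intro i
    rw [Finset.mul_sum]
    rw [← Equiv.sum_comp (Equiv.addLeft i)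
      (fun n => (starRingEnd ℂ) (Pig N q j g i) * (H i n * Pig N q j g n))]
    refine Finset.sum_congr rfl fun m _ => ?_
    simp only [Equiv.coe_addLeft, Pig, Md, Tr, map_mul]
    have h1 : gw N (j * (i + m)) = gw N (j * i) * gw N (j * m) := by
      rw [mul_add, gw_add]
    rw [h1, conj_gw]
    have h2 : gw N (j * i) ≠ 0 := gw_ne_zero N _
    field_simp
  calc inn N (Pig N q j g) (H.mulVec (Pig N q j g))
      = ∑ i : ZMod N, ∑ m : ZMod N,
          H i (i + m) * (starRingEnd ℂ) (g (i - q)) * g (i + m - q) * gw N (j * m) := by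
        unfold inn
        refine Finset.sum_congr rfl fun i _ => ?_
        exact (key i).symm ▸ rfl
    _ = ∑ m : ZMod N, ∑ i : ZMod N,
          H i (i + m) * (starRingEnd ℂ) (g (i - q)) * g (i + m - q) * gw N (j * m) :=
        Finset.sum_comm
    _ = _ := by
        refine Finset.sum_congr rfl fun m _ => ?_
        rw [Finset.sum_mul]

/-- Recovery of structured sparse matrices from linear Gabor measurements:
under the uncertainty principle with constant `θ` and the condition
`θ + K + 1 ≤ ‖(⟨g, g_{p,·}⟩)‖₀ ≤ k̂` for every `p`, any matrix supported on
`𝒦 × 𝒦` with `|𝒦| ≤ K` whose measurements over `A × B` vanish is zero,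
provided `|A| ≥ θ + k̂ + 1` and `|B| ≥ θ + K² - K + 2`. -/
theorem Gabor_sparse_matrix_recovery (N : ℕ) [NeZero N] (θ : ℤ) (K khat : ℕ)
    (g : ZMod N → ℂ)
    (hUP : ∀ f : ZMod N → ℂ, f ≠ 0 →
      (N : ℤ) - θ ≤ (Set.ncard {n | f n ≠ 0} : ℤ) + (Set.ncard {j | dft N f j ≠ 0} : ℤ))
    (hg : ∀ p : ZMod N,
      θ + (K : ℤ) + 1 ≤ (Set.ncard {l | inn N g (Pig N p l g) ≠ 0} : ℤ) ∧
      (Set.ncard {l | inn N g (Pig N p l g) ≠ 0} : ℤ) ≤ (khat : ℤ))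
    (A B : Finset (ZMod N))
    (hA : θ + (khat : ℤ) + 1 ≤ (A.card : ℤ))
    (hB : θ + (K : ℤ) ^ 2 - (K : ℤ) + 2 ≤ (B.card : ℤ))
    (H : Matrix (ZMod N) (ZMod N) ℂ)
    (hsupp : ∃ 𝒦 : Finset (ZMod N), 𝒦.card ≤ K ∧
      ∀ i j : ZMod N, ¬ (i ∈ 𝒦 ∧ j ∈ 𝒦) → H i j = 0)
    (hmeas : ∀ q ∈ A, ∀ j ∈ B, inn N (Pig N q j g) (H.mulVec (Pig N q j g)) = 0) :
    H = 0 := by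
  obtain ⟨𝒦, h𝒦card, h𝒦⟩ := hsupp
  -- generic counting lemma
  have hcount : ∀ (f : ZMod N → ℂ) (S : Finset (ZMod N)),
      {x | f x ≠ 0} ⊆ ↑S → ({x | f x ≠ 0}.ncard : ℤ) ≤ (S.card : ℤ) := by
    intro f S hsub
    have := Set.ncard_le_ncard hsub S.finite_toSet
    rw [Set.ncard_coe_finset] at this
    exact_mod_cast this
  have hcard_univ : Fintype.card (ZMod N) = N := ZMod.card N
  -- counting via vanishing on a finset
  have hvanish : ∀ (f : ZMod N → ℂ) (S : Finset (ZMod N)),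
      (∀ x ∈ S, f x = 0) → ({x | f x ≠ 0}.ncard : ℤ) ≤ (N : ℤ) - (S.card : ℤ) := by
    intro f S hS
    have hsub : {x | f x ≠ 0} ⊆ ↑(Sᶜ) := by
      intro x hx
      simp only [Finset.coe_compl, Set.mem_compl_iff, Finset.mem_coe]
      exact fun hxS => hx (hS x hxS)
    have := hcount f Sᶜ hsub
    rwa [Finset.card_compl, hcard_univ,
      Nat.cast_sub (by simpa [hcard_univ] using S.card_le_univ)] at this
  -- Step B : all the diagonal correlation functions vanish on A
  have key : ∀ q ∈ A, ∀ m : ZMod N,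
      (∑ i : ZMod N, H i (i + m) * (starRingEnd ℂ) (g (i - q)) * g (i + m - q)) = 0 := by
    intro q hq
    set F : ZMod N → ℂ :=
      fun m => ∑ i : ZMod N, H i (i + m) * (starRingEnd ℂ) (g (i - q)) * g (i + m - q)
      with hFdef
    suffices hF0 : F = 0 by
      intro m; exact congrFun hF0 m
    by_contra hF0
    -- dft F vanishes on -B
    have hdftB : ∀ b ∈ B, dft N F (-b) = 0 := by
      intro b hb
      have hm := hmeas q hq b hb
      rw [meas_eq] at hm
      have hrfl : dft N F (-b) = ∑ n : ZMod N, F n * gw N (-(n * -b)) := rfl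
      rw [hrfl, ← hm]
      refine Finset.sum_congr rfl fun n _ => ?_
      simp only [hFdef]
      rw [show -(n * -b) = b * n by ring]
    have hdft_supp : ({j | dft N F j ≠ 0}.ncard : ℤ) ≤ (N : ℤ) - (B.card : ℤ) := by
      have := hvanish (dft N F) (B.image fun b => -b) (by
        intro x hx
        simp only [Finset.mem_image] at hx
        obtain ⟨b, hb, rfl⟩ := hx
        exact hdftB b hb)
      rwa [Finset.card_image_of_injective _ neg_injective] at this
    -- support of F
    set S : Finset (ZMod N) := insert (0 : ZMod N)
      (((𝒦 ×ˢ 𝒦).filter fun p => p.1 ≠ p.2).image fun p => p.2 - p.1) with hSdef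
    have hFsupp : {m | F m ≠ 0} ⊆ ↑S := by
      intro m hm
      simp only [Set.mem_setOf_eq] at hm
      obtain ⟨i, -, hi⟩ := Finset.exists_ne_zero_of_sum_ne_zero hm
      have hH : H i (i + m) ≠ 0 := fun h => hi (by simp [h])
      have hi𝒦 : i ∈ 𝒦 ∧ i + m ∈ 𝒦 := by
        by_contra hc; exact hH (h𝒦 _ _ hc)
      by_cases hm0 : m = 0
      · simp [hSdef, hm0]
      · simp only [hSdef, Finset.coe_insert, Set.mem_insert_iff, Finset.coe_image,
          Set.mem_image, Finset.mem_coe, Finset.mem_filter, Finset.mem_product]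
        right
        refine ⟨(i, i + m), ⟨⟨hi𝒦.1, hi𝒦.2⟩, ?_⟩, by ring⟩
        simp only [ne_eq, left_eq_add]
        exact hm0
    have hScard : (S.card : ℤ) ≤ (K : ℤ) ^ 2 - (K : ℤ) + 1 := by
      have h1 : ((𝒦 ×ˢ 𝒦).filter fun p => p.1 ≠ p.2) ⊆
          (𝒦 ×ˢ 𝒦) \ (𝒦.image fun a => (a, a)) := by
        intro p hp
        simp only [Finset.mem_filter, Finset.mem_product] at hp
        simp only [Finset.mem_sdiff, Finset.mem_product, Finset.mem_image]
        refine ⟨⟨hp.1.1, hp.1.2⟩, ?_⟩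
        rintro ⟨a, -, rfl⟩
        exact hp.2 rfl
      have himg : (𝒦.image fun a => (a, a)) ⊆ 𝒦 ×ˢ 𝒦 := by
        intro p hp
        simp only [Finset.mem_image] at hp
        obtain ⟨a, ha, rfl⟩ := hp
        simp [Finset.mem_product, ha]
      have hinj : Function.Injective (fun a : ZMod N => (a, a)) := by
        intro a b hab; exact congrArg Prod.fst hab
      have h2 : ((𝒦 ×ˢ 𝒦).filter fun p => p.1 ≠ p.2).card ≤
          𝒦.card * 𝒦.card - 𝒦.card := by
        calc ((𝒦 ×ˢ 𝒦).filter fun p => p.1 ≠ p.2).card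
            ≤ ((𝒦 ×ˢ 𝒦) \ (𝒦.image fun a => (a, a))).card := Finset.card_le_card h1
          _ = 𝒦.card * 𝒦.card - 𝒦.card := by
              rw [Finset.card_sdiff_of_subset himg, Finset.card_product,
                Finset.card_image_of_injective _ hinj]
      have h3 : S.card ≤ 1 + (𝒦.card * 𝒦.card - 𝒦.card) := by
        calc S.card ≤ _ + 1 := Finset.card_insert_le _ _
          _ ≤ ((𝒦 ×ˢ 𝒦).filter fun p => p.1 ≠ p.2).card + 1 :=
              Nat.add_le_add_right (Finset.card_image_le) 1
          _ ≤ (𝒦.card * 𝒦.card - 𝒦.card) + 1 := Nat.add_le_add_right h2 1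
          _ = 1 + (𝒦.card * 𝒦.card - 𝒦.card) := by ring
      have hcK : (𝒦.card : ℤ) ≤ (K : ℤ) := by exact_mod_cast h𝒦card
      have hcc : 𝒦.card ≤ 𝒦.card * 𝒦.card := by
        rcases Nat.eq_zero_or_pos 𝒦.card with h | h
        · simp [h]
        · exact Nat.le_mul_of_pos_left _ h
      have h4 : (S.card : ℤ) ≤ 1 + ((𝒦.card : ℤ) * 𝒦.card - 𝒦.card) := by
        have := (Nat.cast_le (α := ℤ)).2 h3
        rwa [Nat.cast_add, Nat.cast_one, Nat.cast_sub hcc, Nat.cast_mul] at this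
      have h5 : (𝒦.card : ℤ) * 𝒦.card - 𝒦.card ≤ (K : ℤ) ^ 2 - K := by
        have hc0 : (0:ℤ) ≤ (𝒦.card : ℤ) := Int.natCast_nonneg _
        rcases eq_or_lt_of_le hcK with h | h
        · rw [h]; nlinarith
        · have h6 : (0:ℤ) ≤ (K:ℤ) - 𝒦.card := by linarith
          have h7 : (0:ℤ) ≤ (K:ℤ) + 𝒦.card - 1 := by linarith
          nlinarith [mul_nonneg h6 h7]
      linarith
    have hFsupp_card := hcount F S hFsupp
    have := hUP F hF0
    linarith
  -- Step C : the diagonals of H vanish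
  have diag : ∀ m : ZMod N, (fun i => H i (i + m)) = 0 := by
    intro m
    by_contra hd0
    set d : ZMod N → ℂ := fun i => H i (i + m) with hddef
    set Ψ : ZMod N → ℂ := fun l => inn N g (Pig N (-m) l g) with hΨdef
    set φ : ZMod N → ℂ :=
      fun q => ∑ i : ZMod N, d i * ((starRingEnd ℂ) (g (i - q)) * g (i - q + m))
      with hφdef
    have hφA : ∀ q ∈ A, φ q = 0 := by
      intro q hq
      rw [← key q hq m]
      simp only [hφdef, hddef]
      refine Finset.sum_congr rfl fun i _ => ?_
      rw [show i + m - q = i - q + m by ring]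
      ring
    -- convolution identity
    have hΨeq : ∀ j : ZMod N,
        Ψ j = ∑ t : ZMod N, ((starRingEnd ℂ) (g t) * g (t + m)) * gw N (t * j) := by
      intro j
      simp only [hΨdef]
      unfold inn Pig Md Tr
      refine Finset.sum_congr rfl fun t _ => ?_
      rw [sub_neg_eq_add, show j * t = t * j by ring]
      ring
    have hconv : ∀ j : ZMod N, dft N φ j = dft N d j * Ψ j := by
      intro j
      rw [hΨeq j]
      unfold dft
      rw [Finset.sum_mul_sum]
      calc ∑ q : ZMod N, φ q * gw N (-(q * j))
          = ∑ q : ZMod N, ∑ i : ZMod N,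
              d i * ((starRingEnd ℂ) (g (i - q)) * g (i - q + m)) * gw N (-(q * j)) := by
            refine Finset.sum_congr rfl fun q _ => ?_
            simp only [hφdef]
            exact Finset.sum_mul _ _ _
        _ = ∑ i : ZMod N, ∑ q : ZMod N,
              d i * ((starRingEnd ℂ) (g (i - q)) * g (i - q + m)) * gw N (-(q * j)) :=
            Finset.sum_comm
        _ = ∑ i : ZMod N, ∑ t : ZMod N,
              d i * gw N (-(i * j)) * (((starRingEnd ℂ) (g t) * g (t + m)) * gw N (t * j)) := by
            refine Finset.sum_congr rfl fun i _ => ?_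
            rw [← Equiv.sum_comp (Equiv.subLeft i)
              (fun q => d i * ((starRingEnd ℂ) (g (i - q)) * g (i - q + m)) * gw N (-(q * j)))]
            refine Finset.sum_congr rfl fun t _ => ?_
            simp only [Equiv.subLeft_apply]
            rw [show i - (i - t) = t by ring,
              show -((i - t) * j) = -(i * j) + t * j by ring, gw_add]
            ring
    -- support of d
    have hdsupp : ({i | d i ≠ 0}.ncard : ℤ) ≤ (K : ℤ) := by
      have hsub : {i | d i ≠ 0} ⊆ ↑𝒦 := by
        intro i hi
        simp only [Set.mem_setOf_eq, hddef] at hi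
        by_contra hc
        exact hi (h𝒦 _ _ fun hand => hc hand.1)
      have h1 := hcount d 𝒦 hsub
      have hcK : (𝒦.card : ℤ) ≤ (K : ℤ) := by exact_mod_cast h𝒦card
      linarith
    have hUPd := hUP d hd0
    have hgm1 : θ + (K : ℤ) + 1 ≤ ({l | Ψ l ≠ 0}.ncard : ℤ) := by
      simpa only [hΨdef] using (hg (-m)).1
    have hgm2 : ({l | Ψ l ≠ 0}.ncard : ℤ) ≤ (khat : ℤ) := by
      simpa only [hΨdef] using (hg (-m)).2
    have hsuppφhat : {j | dft N φ j ≠ 0} = {j | dft N d j ≠ 0} ∩ {l | Ψ l ≠ 0} := by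
      ext j
      simp only [Set.mem_inter_iff, Set.mem_setOf_eq, hconv j, mul_ne_zero_iff]
    have hinter := Set.ncard_inter_add_ncard_union {j | dft N d j ≠ 0} {l | Ψ l ≠ 0}
      (Set.toFinite _) (Set.toFinite _)
    have hinterZ : (({j | dft N d j ≠ 0} ∩ {l | Ψ l ≠ 0}).ncard : ℤ) +
        (({j | dft N d j ≠ 0} ∪ {l | Ψ l ≠ 0}).ncard : ℤ) =
        ({j | dft N d j ≠ 0}.ncard : ℤ) + ({l | Ψ l ≠ 0}.ncard : ℤ) := by
      exact_mod_cast congrArg (Nat.cast : ℕ → ℤ) hinter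
    have hunion : (({j | dft N d j ≠ 0} ∪ {l | Ψ l ≠ 0}).ncard : ℤ) ≤ (N : ℤ) := by
      have h1 := Set.ncard_le_ncard (Set.subset_univ
        ({j | dft N d j ≠ 0} ∪ {l | Ψ l ≠ 0})) Set.finite_univ
      rw [Set.ncard_univ, Nat.card_eq_fintype_card, hcard_univ] at h1
      exact_mod_cast h1
    have h1 : (1 : ℤ) ≤ ({j | dft N φ j ≠ 0}.ncard : ℤ) := by
      rw [hsuppφhat]
      linarith
    have hφ0 : φ ≠ 0 := by
      have hne : {j | dft N φ j ≠ 0}.ncard ≠ 0 := by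
        intro h; rw [h] at h1; norm_num at h1
      obtain ⟨j, hj⟩ := Set.nonempty_of_ncard_ne_zero hne
      intro h
      rw [h] at hj
      simp [dft] at hj
    have hUPφ := hUP φ hφ0
    have hφcard : ({q | φ q ≠ 0}.ncard : ℤ) ≤ (N : ℤ) - (A.card : ℤ) := hvanish φ A hφA
    have hφhatcard : ({j | dft N φ j ≠ 0}.ncard : ℤ) ≤ (khat : ℤ) := by
      have hsub : {j | dft N φ j ≠ 0} ⊆ {l | Ψ l ≠ 0} := by
        rw [hsuppφhat]; exact Set.inter_subset_right
      have h2 := Set.ncard_le_ncard hsub (Set.toFinite _)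
      have h3 : (({j | dft N φ j ≠ 0}).ncard : ℤ) ≤ ({l | Ψ l ≠ 0}.ncard : ℤ) := by
        exact_mod_cast h2
      linarith
    linarith
  ext i j
  have := congrFun (diag (j - i)) i
  simpa using this
end

section
/- Let θ ∈ ℤ be such that for every nonzero f : ZMod N → ℂ, ‖f‖₀ + ‖f̂‖₀ ≥ N − θ. Let k, k̂ ∈ ℕ and let g : ZMod N → ℂ be a generator such that for every p ∈ ZMod N, θ + 2k + 1 ≤ #{ℓ ∈ ZMod N : ⟨g, Π_{(p,ℓ)} g⟩ ≠ 0} ≤ k̂ (as integers). Let A, B be finite subsets of ZMod N with |A| ≥ θ + k̂ + 1 and |B| ≥ θ + (2k)² − 2k + 2 (as integers). Then the system {g_λ : λ ∈ A×B} allows k-sparse phase retrieval: for all x, y : ZMod N → ℂ with ‖x‖₀ ≤ k and ‖y‖₀ ≤ k, if |⟨x, g_λ⟩| = |⟨y, g_λ⟩| for every λ ∈ A×B, then there exists c ∈ ℂ with |c| = 1 and x = c • y. -/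
open Complex Finset

/-!
Write `v_q = x · conj (T_q g)`, so that `⟨x, Π_(q,ℓ) g⟩ = conj (v̂_q ℓ)`. For `q ∈ A` the
measurements give `|v̂_q|²` on `B`, and `|v̂_q|²` is the Fourier transform of the autocorrelation of
`v_q`, which lives on `T - T` for `T = supp x ∪ supp y`. Since `|B| > θ + |T - T|`, the uncertainty
principle applied to the difference of these autocorrelations for `x` and for `y` makes them agree.

Read as a function of `q`, the autocorrelation of `v_q` at lag `m` is the cross-correlation of the
lag product `L_{x,m} = x · conj (T_m x)` with `L_{g,m}`, and `conj (L̂_{g,m})` is the ambiguity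
function `ℓ ↦ ⟨g, Π_(m,ℓ) g⟩`. So the cross-correlation of `L_{x,m} - L_{y,m}` with `L_{g,m}`
vanishes on `A`, while its Fourier transform `(L̂_{x,m} - L̂_{y,m}) · conj L̂_{g,m}` has at most
`k̂` nonzero values; the uncertainty principle kills it. Then `L̂_{x,m} - L̂_{y,m}` vanishes on the
at least `θ + 2k + 1` points where the ambiguity function does not, while `L_{x,m} - L_{y,m}` is
`2k`-sparse, so once more `L_{x,m} = L_{y,m}`. Thus `x a · conj (x b) = y a · conj (y b)` for all
`a, b`, which determines `x` up to a unimodular factor.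
-/

open scoped Pointwise ComplexConjugate

lemma Finset.card_sub_self_add_le {G : Type*} [AddGroup G] [DecidableEq G] {s : Finset G} {n : ℕ}
    (hs : s.card ≤ n) : (s - s).card + n ≤ n * n + 1 := by
  have hsub : s - s ⊆ insert 0 (s.offDiag.image fun p => p.1 - p.2) := by
    intro d hd
    obtain ⟨a, ha, b, hb, rfl⟩ := Finset.mem_sub.1 hd
    rcases eq_or_ne a b with rfl | hab
    · simp
    · exact mem_insert_of_mem (mem_image.2 ⟨(a, b), mem_offDiag.2 ⟨ha, hb, hab⟩, rfl⟩)
  have hcard : (s - s).card + s.card ≤ s.card * s.card + 1 := by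
    have := (card_le_card hsub).trans ((card_insert_le _ _).trans (Nat.succ_le_succ card_image_le))
    rw [offDiag_card] at this
    have := Nat.le_mul_self s.card
    omega
  rcases hs.eq_or_lt with rfl | hlt
  · exact hcard
  · nlinarith

lemma exists_norm_eq_one_smul_of_mul_conj_eq_s16 {ι : Type*} {x y : ι → ℂ}
    (h : ∀ a b, x a * conj (x b) = y a * conj (y b)) : ∃ c : ℂ, ‖c‖ = 1 ∧ x = c • y := by
  by_cases hy : y = 0
  · refine ⟨1, norm_one, funext fun a => ?_⟩
    simpa [hy, Complex.mul_conj] using h a a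
  obtain ⟨b, hb⟩ := Function.ne_iff.1 hy
  have hnorm : ‖x b‖ = ‖y b‖ := by
    have := h b b
    rw [Complex.mul_conj', Complex.mul_conj'] at this
    exact (pow_left_inj₀ (norm_nonneg _) (norm_nonneg _) two_ne_zero).1 (by exact_mod_cast this)
  have hxb : x b ≠ 0 := norm_ne_zero_iff.1 (hnorm ▸ norm_ne_zero_iff.2 hb)
  refine ⟨conj (y b) / conj (x b), ?_, funext fun a => ?_⟩
  · rw [norm_div, Complex.norm_conj, Complex.norm_conj, hnorm, div_self (norm_ne_zero_iff.2 hb)]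
  · rw [Pi.smul_apply, smul_eq_mul, div_mul_eq_mul_div, eq_div_iff ((map_ne_zero _).2 hxb), h a b]
    ring

section Fourier

variable {N : ℕ} [NeZero N]

lemma gw_eq_stdAddChar_s16 : gw N = ZMod.stdAddChar := by
  funext m
  rw [ZMod.stdAddChar_apply, ZMod.toCircle_apply]
  rfl

lemma dft_sub (f g : ZMod N → ℂ) : dft N (f - g) = dft N f - dft N g := by
  funext j
  simp only [dft, Pi.sub_apply, sub_mul, sum_sub_distrib]

lemma inn_Pig_eq_conj_dft (x g : ZMod N → ℂ) (p l : ZMod N) :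
    inn N x (Pig N p l g) = conj (dft N (x * star (Tr N p g)) l) := by
  simp only [inn, Pig, Md, Tr, dft, map_sum, map_mul, Pi.mul_apply, Pi.star_apply,
    star_def, conj_conj, gw_eq_stdAddChar_s16, AddChar.map_neg_eq_conj]
  refine sum_congr rfl fun n _ => ?_
  rw [mul_comm n l]
  ring

lemma setOf_inn_Pig_ne_zero (x g : ZMod N → ℂ) (p : ZMod N) :
    {l | inn N x (Pig N p l g) ≠ 0} = Function.support (dft N (x * star (Tr N p g))) := by
  ext l
  simp [inn_Pig_eq_conj_dft]

def corr (v w : ZMod N → ℂ) : ZMod N → ℂ :=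
  fun q => ∑ n, v n * conj (w (n - q))

lemma corr_sub_left (u v w : ZMod N → ℂ) : corr (u - v) w = corr u w - corr v w := by
  funext q
  simp only [corr, Pi.sub_apply, sub_mul, sum_sub_distrib]

lemma dft_corr (v w : ZMod N → ℂ) (ξ : ZMod N) :
    dft N (corr v w) ξ = dft N v ξ * conj (dft N w ξ) := by
  simp only [dft, corr, gw_eq_stdAddChar_s16, map_sum, map_mul, ← AddChar.map_neg_eq_conj, sum_mul,
    mul_sum]
  rw [sum_comm]
  conv_rhs => rw [sum_comm]
  refine sum_congr rfl fun n _ => Fintype.sum_equiv (Equiv.subLeft n) _ _ fun q => ?_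
  rw [Equiv.subLeft_apply, neg_neg,
    show -(q * ξ) = -(n * ξ) + (n - q) * ξ by ring, AddChar.map_add_eq_mul]
  ring

lemma support_corr_subset (v w : ZMod N → ℂ) :
    Function.support (corr v w) ⊆ Function.support v - Function.support w := by
  intro q hq
  obtain ⟨n, -, hn⟩ := exists_ne_zero_of_sum_ne_zero hq
  refine ⟨n, left_ne_zero_of_mul hn, n - q, fun h => ?_, sub_sub_cancel n q⟩
  exact right_ne_zero_of_mul hn (by rw [h, map_zero])

lemma corr_mul_star_Tr_swap (x g : ZMod N → ℂ) (q m : ZMod N) :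
    corr (x * star (Tr N q g)) (x * star (Tr N q g)) m =
      corr (x * star (Tr N m x)) (g * star (Tr N m g)) q := by
  refine sum_congr rfl fun n _ => ?_
  simp only [Tr, Pi.mul_apply, Pi.star_apply, star_def, map_mul, conj_conj, sub_right_comm n m q]
  ring

lemma ZMod.ncard_compl (S : Set (ZMod N)) :
    (Sᶜ.ncard : ℤ) = N - S.ncard := by
  have := Set.ncard_add_ncard_compl S
  rw [Nat.card_zmod] at this
  omega

end Fourier

def UncertaintyPrinciple (N : ℕ) [NeZero N] (θ : ℤ) : Prop :=
  ∀ f : ZMod N → ℂ, f ≠ 0 →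
    (N : ℤ) - θ ≤ (Function.support f).ncard + (Function.support (dft N f)).ncard

namespace UncertaintyPrinciple

variable {N : ℕ} [NeZero N] {θ : ℤ}

lemma eq_zero (hUP : UncertaintyPrinciple N θ) {f : ZMod N → ℂ} {P Q : Set (ZMod N)}
    (hP : Function.support f ⊆ P) (hQ : Function.support (dft N f) ⊆ Q)
    (h : (P.ncard : ℤ) + Q.ncard < N - θ) : f = 0 := by
  by_contra hf
  have := hUP f hf
  have := Set.ncard_le_ncard hP
  have := Set.ncard_le_ncard hQ
  omega

lemma corr_self_eq_of_norm_dft_eq (hUP : UncertaintyPrinciple N θ) {v w : ZMod N → ℂ}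
    {T B : Finset (ZMod N)} (hT : Function.support v ∪ Function.support w ⊆ T)
    (hB : θ + (T - T).card < B.card) (h : ∀ j ∈ B, ‖dft N v j‖ = ‖dft N w j‖) :
    corr v v = corr w w := by
  refine sub_eq_zero.1 (hUP.eq_zero (P := ↑(T - T)) (Q := (↑B)ᶜ) ?_ ?_ ?_)
  · obtain ⟨hv, hw⟩ := Set.union_subset_iff.1 hT
    rw [Finset.coe_sub]
    exact (Function.support_sub _ _).trans (Set.union_subset
      ((support_corr_subset v v).trans (Set.sub_subset_sub hv hv))
      ((support_corr_subset w w).trans (Set.sub_subset_sub hw hw)))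
  · intro j hj hjB
    rw [Function.mem_support, dft_sub, Pi.sub_apply, dft_corr, dft_corr, Complex.mul_conj',
      Complex.mul_conj', h j hjB, sub_self] at hj
    exact hj rfl
  · rw [ZMod.ncard_compl, Set.ncard_coe_finset, Set.ncard_coe_finset]
    omega

lemma dft_eq_zero_of_corr_eq_zero (hUP : UncertaintyPrinciple N θ) {u G : ZMod N → ℂ}
    {A : Finset (ZMod N)} (hA : θ + (Function.support (dft N G)).ncard < A.card)
    (h : ∀ q ∈ A, corr u G q = 0) : ∀ ξ ∈ Function.support (dft N G), dft N u ξ = 0 := by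
  have hcorr : corr u G = 0 := by
    refine hUP.eq_zero (P := (↑A)ᶜ) (Q := Function.support (dft N G))
      (fun q hq hqA => hq (h q hqA)) (fun ξ hξ hG => hξ ?_) ?_
    · rw [dft_corr, hG, map_zero, mul_zero]
    · rw [ZMod.ncard_compl, Set.ncard_coe_finset]
      omega
  intro ξ hξ
  have h0 : dft N (corr u G) ξ = 0 := by simp [hcorr, dft]
  rw [dft_corr] at h0
  exact (mul_eq_zero.1 h0).resolve_right ((map_ne_zero _).2 hξ)

lemma eq_of_corr_eq_on (hUP : UncertaintyPrinciple N θ) {u₁ u₂ G : ZMod N → ℂ}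
    {A : Finset (ZMod N)} (hA : θ + (Function.support (dft N G)).ncard < A.card)
    (hu : θ + (Function.support u₁ ∪ Function.support u₂).ncard <
      (Function.support (dft N G)).ncard)
    (h : ∀ q ∈ A, corr u₁ G q = corr u₂ G q) : u₁ = u₂ := by
  have hdft := hUP.dft_eq_zero_of_corr_eq_zero hA (u := u₁ - u₂) fun q hq => by
    rw [corr_sub_left, Pi.sub_apply, h q hq, sub_self]
  refine sub_eq_zero.1 (hUP.eq_zero (Function.support_sub _ _)
    (Q := (Function.support (dft N G))ᶜ) (fun ξ hξ hG => hξ (hdft ξ hG)) ?_)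
  rw [ZMod.ncard_compl]
  omega

end UncertaintyPrinciple

/-- `k`-sparse phase retrieval from partial Gabor measurements: under the
uncertainty principle with constant `θ` and the condition
`θ + 2k + 1 ≤ ‖(⟨g, g_{p,·}⟩)‖₀ ≤ k̂` for every `p`, the measurements indexed
by `A × B` with `|A| ≥ θ + k̂ + 1` and `|B| ≥ θ + (2k)² - 2k + 2` allow
`k`-sparse phase retrieval. -/
theorem Gabor_sparse_phase_retrieval (N : ℕ) [NeZero N] (θ : ℤ) (k khat : ℕ)
    (g : ZMod N → ℂ)
    (hUP : ∀ f : ZMod N → ℂ, f ≠ 0 →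
      (N : ℤ) - θ ≤ (Set.ncard {n | f n ≠ 0} : ℤ) + (Set.ncard {j | dft N f j ≠ 0} : ℤ))
    (hg : ∀ p : ZMod N,
      θ + 2 * (k : ℤ) + 1 ≤ (Set.ncard {l | inn N g (Pig N p l g) ≠ 0} : ℤ) ∧
      (Set.ncard {l | inn N g (Pig N p l g) ≠ 0} : ℤ) ≤ (khat : ℤ))
    (A B : Finset (ZMod N))
    (hA : θ + (khat : ℤ) + 1 ≤ (A.card : ℤ))
    (hB : θ + (2 * (k : ℤ)) ^ 2 - 2 * (k : ℤ) + 2 ≤ (B.card : ℤ)) :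
    ∀ x y : ZMod N → ℂ,
      Set.ncard {n | x n ≠ 0} ≤ k → Set.ncard {n | y n ≠ 0} ≤ k →
      (∀ q ∈ A, ∀ j ∈ B,
        ‖inn N x (Pig N q j g)‖ = ‖inn N y (Pig N q j g)‖) →
      ∃ c : ℂ, ‖c‖ = 1 ∧ x = c • y := by
  intro x y (hx : (Function.support x).ncard ≤ k) (hy : (Function.support y).ncard ≤ k) hmeas
  have hUP : UncertaintyPrinciple N θ := hUP
  set S := Function.support x ∪ Function.support y
  have hS : S.ncard ≤ 2 * k := (Set.ncard_union_le _ _).trans (by omega)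
  have hsub (u v : ZMod N → ℂ) : Function.support (x * u) ∪ Function.support (y * v) ⊆ S :=
    Set.union_subset_union (Function.support_mul_subset_left _ _)
      (Function.support_mul_subset_left _ _)
  obtain ⟨T, hTS⟩ := (Set.toFinite S).exists_finset_coe
  have hT : ((T - T).card : ℤ) + 2 * k ≤ 2 * k * (2 * k) + 1 := by
    exact_mod_cast Finset.card_sub_self_add_le (by rwa [← hTS, Set.ncard_coe_finset] at hS)
  have hwindow (q : ZMod N) (hq : q ∈ A) :
      corr (x * star (Tr N q g)) (x * star (Tr N q g)) =
        corr (y * star (Tr N q g)) (y * star (Tr N q g)) := by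
    refine hUP.corr_self_eq_of_norm_dft_eq (B := B) (hTS ▸ hsub _ _) (by linarith) fun j hj => ?_
    simpa only [inn_Pig_eq_conj_dft, Complex.norm_conj] using hmeas q hq j hj
  have hlag (m : ZMod N) : x * star (Tr N m x) = y * star (Tr N m y) := by
    have hgm := hg m
    have hxy := (Set.ncard_le_ncard (hsub (star (Tr N m x)) (star (Tr N m y)))).trans hS
    rw [setOf_inn_Pig_ne_zero] at hgm
    refine hUP.eq_of_corr_eq_on (G := g * star (Tr N m g)) (A := A) (by omega) (by omega)
      fun q hq => ?_
    rw [← corr_mul_star_Tr_swap, ← corr_mul_star_Tr_swap, hwindow q hq]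
  refine exists_norm_eq_one_smul_of_mul_conj_eq_s16 fun a b => ?_
  simpa [Tr] using congrFun (hlag (a - b)) a
end
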